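/- Let R be a Noetherian ring. Then every injective R-module is a Σ-dual Rickart module if and only if R is a hereditary ring (i.e., every ideal of R is projective as an R-module). -/

import Mathlib

universe u v

/-- A module `M` is dual-Rickart if the image of every endomorphism is a direct summand. -/
def IsDualRickart (R : Type u) [Ring R] (M : Type v) [AddCommGroup M] [Module R M] : Prop :=
  ∀ φ : M →ₗ[R] M, ∃ q : Submodule R M, IsCompl (LinearMap.range φ) q

/-- A module `M` is Σ-dual Rickart if every direct sum of copies of `M` is dual-Rickart. -/
def IsSigmaDualRickart (R : Type u) [Ring R] (M : Type v) [AddCommGroup M] [Module R M] :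
    Prop :=
  ∀ Λ : Type v, IsDualRickart R (Λ →₀ M)

/-!
Both sides are equivalent to: every quotient of an injective module is injective.

If `M` is injective and dual-Rickart, the image of any endomorphism is a direct summand of `M`,
hence injective. Embedding `E ⧸ K` into an injective `Q`, the quotient `E ⧸ K` is the image of an
endomorphism of the injective module `E × Q`. Conversely, if quotients of the injective module `N`
are injective, then so are the images `N ⧸ ker φ` of its endomorphisms, and an injective submodule
is a direct summand. Over a Noetherian ring, direct sums of injective modules are injective, so
this applies to `N = M^(Λ)`.

That quotients of injectives are injective iff all ideals are projective is due to
Cartan–Eilenberg: projectivity of an ideal `I` lets a map `I → E ⧸ K` lift to `E` and then extend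
to `R` (Baer); conversely, a map from `I` into a quotient `N ⧸ K` is pushed into the injective
`E ⧸ K` for an injective `E ⊇ N`, extended to `R`, lifted to `E`, and lands back in `N`.
-/

namespace Module.Injective

variable {R : Type u} [Ring R] {M N : Type v} [AddCommGroup M] [Module R M] [AddCommGroup N]
  [Module R N]

theorem of_leftInverse (hM : Module.Injective R M) (i : N →ₗ[R] M) (r : M →ₗ[R] N)
    (hri : Function.LeftInverse r i) : Module.Injective R N := by
  refine ⟨fun X Y _ _ _ _ f hf g => ?_⟩
  obtain ⟨h, hh⟩ := hM.out f hf (i ∘ₗ g)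
  exact ⟨r ∘ₗ h, fun x => by simp [hh x, hri (g x)]⟩

theorem of_linearEquiv (hM : Module.Injective R M) (e : M ≃ₗ[R] N) : Module.Injective R N :=
  hM.of_leftInverse e.symm.toLinearMap e.toLinearMap e.apply_symm_apply

theorem of_isCompl (hM : Module.Injective R M) {p q : Submodule R M} (h : IsCompl p q) :
    Module.Injective R p :=
  hM.of_leftInverse p.subtype (p.projectionOnto q h)
    (Submodule.projectionOnto_apply_left h)

theorem prod (hM : Module.Injective R M) (hN : Module.Injective R N) :
    Module.Injective R (M × N) := by
  refine ⟨fun X Y _ _ _ _ f hf g => ?_⟩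
  obtain ⟨h₁, hh₁⟩ := hM.out f hf (LinearMap.fst R M N ∘ₗ g)
  obtain ⟨h₂, hh₂⟩ := hN.out f hf (LinearMap.snd R M N ∘ₗ g)
  exact ⟨h₁.prod h₂, fun x => Prod.ext (hh₁ x) (hh₂ x)⟩

end Module.Injective

section

variable {R : Type u} [Ring R] {M : Type v} [AddCommGroup M] [Module R M]

theorem Submodule.exists_isCompl_of_injective (p : Submodule R M)
    (hp : Module.Injective R p) : ∃ q : Submodule R M, IsCompl p q := by
  obtain ⟨r, hr⟩ := hp.out p.subtype p.injective_subtype LinearMap.id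
  exact ⟨_, LinearMap.isCompl_of_proj hr⟩

variable (R M) in
theorem exists_injective_embedding [Small.{v} R] :
    ∃ (Q : Type v) (_ : AddCommGroup Q) (_ : Module R Q) (ι : M →ₗ[R] Q),
      Module.Injective R Q ∧ Function.Injective ι := by
  open CategoryTheory in
  let Q : ModuleCat.{v} R := Injective.under (ModuleCat.of R M)
  let ι : ModuleCat.of R M ⟶ Q := Injective.ι (ModuleCat.of R M)
  refine ⟨Q, inferInstance, inferInstance, ι.hom, ?_, ?_⟩
  · have : Injective (ModuleCat.of R Q) := Injective.injective_under (ModuleCat.of R M)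
    exact Module.injective_module_of_injective_object R Q
  · exact (ModuleCat.mono_iff_injective ι).mp inferInstance

end

section QuotientsOfInjectives

variable {R : Type u} [Ring R] {E Q : Type v} [AddCommGroup E] [Module R E] [AddCommGroup Q]
  [Module R Q]

theorem Module.Baer.exists_lift_of_surjective (hQ : Module.Baer R Q) (π : E →ₗ[R] Q)
    (hπ : Function.Surjective π) (I : Ideal R) (g : I →ₗ[R] Q) :
    ∃ G : I →ₗ[R] E, π ∘ₗ G = g := by
  obtain ⟨H, hH⟩ := hQ I g
  obtain ⟨e, he⟩ := hπ (H 1)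
  refine ⟨LinearMap.toSpanSingleton R E e ∘ₗ I.subtype, LinearMap.ext fun x => ?_⟩
  simp [he, ← hH x x.2, ← map_smul]

theorem Submodule.injective_quotient_of_forall_projective_ideal [Small.{v} R]
    (h : ∀ I : Ideal R, Module.Projective R I) (hE : Module.Injective R E) (K : Submodule R E) :
    Module.Injective R (E ⧸ K) := by
  refine Module.Baer.injective fun I g => ?_
  obtain ⟨g₁, hg₁⟩ := Module.projective_lifting_property K.mkQ g K.mkQ_surjective
  obtain ⟨G, hG⟩ := Module.Baer.of_injective hE I g₁
  exact ⟨K.mkQ ∘ₗ G, fun x hx => by simp [hG x hx, ← hg₁]⟩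

end QuotientsOfInjectives

theorem Ideal.projective_of_forall_injective_quotient {R : Type u} [Ring R]
    (h : ∀ (E : Type u) [AddCommGroup E] [Module R E], Module.Injective R E →
      ∀ K : Submodule R E, Module.Injective R (E ⧸ K)) (I : Ideal R) :
    Module.Projective R I := by
  refine Module.Projective.of_lifting_property fun {N N''} _ _ _ _ π f hπ => ?_
  obtain ⟨E, _, _, ι, hE, hι⟩ := exists_injective_embedding R N
  let K := (LinearMap.ker π).map ι
  let χ : N'' →ₗ[R] E ⧸ K := (LinearMap.ker π).mapQ K ι (Submodule.le_comap_map _ _) ∘ₗ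
    (π.quotKerEquivOfSurjective hπ).symm.toLinearMap
  have hχ (n : N) : χ (π n) = K.mkQ (ι n) := by
    have : (π.quotKerEquivOfSurjective hπ).symm (π n) = Submodule.Quotient.mk n := by
      rw [LinearEquiv.symm_apply_eq, LinearMap.quotKerEquivOfSurjective_apply_mk]
    simp [χ, this]
  obtain ⟨G, hG⟩ := (Module.Baer.of_injective (h E hE K)).exists_lift_of_surjective
    K.mkQ K.mkQ_surjective I (χ ∘ₗ f)
  have hGι (x : I) : ∃ n, ι n = G x ∧ π n = f x := by
    obtain ⟨n, hn⟩ := hπ (f x)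
    have : G x - ι n ∈ K := by
      have hGx : K.mkQ (G x) = χ (f x) := LinearMap.congr_fun hG x
      rw [← Submodule.Quotient.mk_eq_zero, Submodule.Quotient.mk_sub, ← K.mkQ_apply,
        hGx, ← hn, hχ, K.mkQ_apply, sub_self]
    obtain ⟨k, hk, hk'⟩ := Submodule.mem_map.1 this
    exact ⟨n + k, by rw [map_add, hk']; abel, by rw [map_add, hk, add_zero, hn]⟩
  let e := LinearEquiv.ofInjective ι hι
  have hGrange (x : I) : G x ∈ LinearMap.range ι :=
    let ⟨n, hn, _⟩ := hGι x
    ⟨n, hn⟩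
  refine ⟨e.symm.toLinearMap ∘ₗ G.codRestrict _ hGrange, LinearMap.ext fun x => ?_⟩
  obtain ⟨n, hn, hfn⟩ := hGι x
  have : G.codRestrict _ hGrange x = e n := Subtype.ext hn.symm
  rw [LinearMap.comp_apply, LinearMap.comp_apply, this, LinearEquiv.coe_coe, e.symm_apply_apply,
    hfn]

theorem Finsupp.exists_finset_range_le_supported {R : Type*} [Semiring R] {M P Λ : Type*}
    [AddCommMonoid M] [Module R M] [AddCommMonoid P] [Module R P] [Module.Finite R P]
    (g : P →ₗ[R] Λ →₀ M) : ∃ S : Finset Λ, LinearMap.range g ≤ Finsupp.supported M R ↑S := by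
  classical
  obtain ⟨T, hT⟩ := Module.Finite.fg_top (R := R) (M := P)
  refine ⟨T.biUnion fun t => (g t).support, ?_⟩
  rw [LinearMap.range_eq_map, ← hT, Submodule.map_span_le]
  intro t ht
  exact (Finsupp.mem_supported _ _).2
    (Finset.coe_subset.2 (Finset.subset_biUnion_of_mem (fun t => (g t).support) ht))

theorem Module.Injective.finsupp {R : Type u} [Ring R] [IsNoetherianRing R] [Small.{v} R]
    {M : Type v} [AddCommGroup M] [Module R M] (hM : Module.Injective R M) (Λ : Type v) :
    Module.Injective R (Λ →₀ M) := by
  refine Module.Baer.injective fun I g => ?_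
  obtain ⟨S, hS⟩ := Finsupp.exists_finset_range_le_supported g
  have := hM
  have hinj : Module.Injective R (Finsupp.supported M R (S : Set Λ)) :=
    (Module.Injective.pi R fun _ : S => M).of_linearEquiv
      ((Finsupp.supportedEquivFinsupp _).trans (Finsupp.linearEquivFunOnFinite R M _)).symm
  obtain ⟨G, hG⟩ := Module.Baer.of_injective hinj I (g.codRestrict _ fun x => hS ⟨x, rfl⟩)
  exact ⟨(Finsupp.supported M R _).subtype ∘ₗ G, fun x hx => by simp [hG x hx]⟩

section DualRickart

variable {R : Type u} [Ring R] {M N E Q : Type v} [AddCommGroup M] [Module R M] [AddCommGroup N]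
  [Module R N] [AddCommGroup E] [Module R E] [AddCommGroup Q] [Module R Q]

theorem IsDualRickart.of_linearEquiv (h : IsDualRickart R M) (e : M ≃ₗ[R] N) :
    IsDualRickart R N := by
  intro φ
  obtain ⟨q, hq⟩ := h (e.symm.toLinearMap ∘ₗ φ ∘ₗ e.toLinearMap)
  have hrange : (LinearMap.range (e.symm.toLinearMap ∘ₗ φ ∘ₗ e.toLinearMap)).map
      (e : M →ₗ[R] N) = LinearMap.range φ := by
    rw [← LinearMap.range_comp, ← LinearMap.comp_assoc, e.comp_symm, LinearMap.id_comp,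
      LinearMap.range_comp_of_range_eq_top _ e.range]
  exact ⟨q.map (e : M →ₗ[R] N), hrange ▸ (Submodule.orderIsoMapComap e).isCompl hq⟩

theorem IsSigmaDualRickart.isDualRickart (h : IsSigmaDualRickart R M) : IsDualRickart R M :=
  (h PUnit).of_linearEquiv (Finsupp.uniqueLinearEquiv R M PUnit.unit)

theorem IsDualRickart.injective_range (h : IsDualRickart R M) (hM : Module.Injective R M)
    (φ : M →ₗ[R] M) : Module.Injective R (LinearMap.range φ) :=
  have ⟨_, hq⟩ := h φ
  hM.of_isCompl hq

theorem isDualRickart_of_forall_injective_quotient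
    (h : ∀ K : Submodule R M, Module.Injective R (M ⧸ K)) : IsDualRickart R M := fun φ =>
  (LinearMap.range φ).exists_isCompl_of_injective
    ((h (LinearMap.ker φ)).of_linearEquiv φ.quotKerEquivRange)

/-- The quotient `E ⧸ K` is the range of `(e, x) ↦ (0, j (e mod K))` for an embedding `j`. -/
theorem Submodule.injective_quotient_of_isDualRickart_prod (hEQ : Module.Injective R (E × Q))
    (h : IsDualRickart R (E × Q)) (K : Submodule R E) (j : E ⧸ K →ₗ[R] Q)
    (hj : Function.Injective j) : Module.Injective R (E ⧸ K) := by
  let ψ : E ⧸ K →ₗ[R] E × Q := LinearMap.inr R E Q ∘ₗ j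
  have hψ : Function.Injective ψ := LinearMap.inr_injective.comp hj
  have hrange : LinearMap.range (ψ ∘ₗ K.mkQ ∘ₗ LinearMap.fst R E Q) = LinearMap.range ψ :=
    LinearMap.range_comp_of_range_eq_top ψ <| LinearMap.range_eq_top.mpr <|
      K.mkQ_surjective.comp LinearMap.fst_surjective
  exact (hrange ▸ h.injective_range hEQ _).of_linearEquiv (LinearEquiv.ofInjective ψ hψ).symm

theorem Submodule.injective_quotient_of_forall_isSigmaDualRickart [Small.{v} R]
    (h : ∀ (M : Type v) [AddCommGroup M] [Module R M],
      Module.Injective R M → IsSigmaDualRickart R M)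
    (hE : Module.Injective R E) (K : Submodule R E) : Module.Injective R (E ⧸ K) := by
  obtain ⟨Q, _, _, j, hQ, hj⟩ := exists_injective_embedding R (E ⧸ K)
  have hEQ := hE.prod hQ
  exact K.injective_quotient_of_isDualRickart_prod hEQ (h _ hEQ).isDualRickart j hj

end DualRickart

/-- Over a Noetherian ring, every injective module is Σ-dual Rickart iff the ring is
(right) hereditary. -/
theorem stmt9 (R : Type u) [Ring R] [IsNoetherianRing R] :
    (∀ (M : Type u) [AddCommGroup M] [Module R M],
        Module.Injective R M → IsSigmaDualRickart R M) ↔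
      (∀ I : Ideal R, Module.Projective R I) := by
  constructor
  · intro h
    exact Ideal.projective_of_forall_injective_quotient fun E _ _ hE K =>
      K.injective_quotient_of_forall_isSigmaDualRickart h hE
  · intro h M _ _ hM Λ
    exact isDualRickart_of_forall_injective_quotient fun K =>
      K.injective_quotient_of_forall_projective_ideal h (hM.finsupp Λ)
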